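/- arXiv:0910.4618 — 2 statements merged into one kernel-verified Lean document; each statement's English description precedes it below -/
import Mathlib

section
/- The marginal vector (MP(1), MP(2), …, MP(N)) is in the core of the coalitional game v: ∑_{i=1}^N MP(i) = N·f*(β̃(N)) = N·f*(β), and for every nonempty subset S ⊆ {1,…,N}, ∑_{i∈S} MP(i) ≥ |S|·f*(β̃(|S|)). -/
open Filter Finset

/-- The benefit function `f` with its first and second derivatives, together with
the maximizer map `α ↦ x̂_α` (the unique `x ≥ 0` with `f'(x̂_α) = α` for `α ∈ (0, f'(0)]`). -/
structure BenefitFun where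
  f : ℝ → ℝ
  f' : ℝ → ℝ
  f'' : ℝ → ℝ
  xhat : ℝ → ℝ
  f_zero : f 0 = 0
  f_nonneg : ∀ x : ℝ, 0 ≤ x → 0 ≤ f x
  hasDeriv : ∀ x ∈ Set.Ici (0:ℝ), HasDerivWithinAt f (f' x) (Set.Ici 0) x
  hasDeriv' : ∀ x ∈ Set.Ici (0:ℝ), HasDerivWithinAt f' (f'' x) (Set.Ici 0) x
  cont_f'' : ContinuousOn f'' (Set.Ici 0)
  f'_pos : ∀ x : ℝ, 0 < x → 0 < f' x
  f''_neg : ∀ x : ℝ, 0 < x → f'' x < 0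
  f'_tendsto : Filter.Tendsto f' Filter.atTop (nhds 0)
  xhat_nonneg : ∀ α : ℝ, 0 < α → α ≤ f' 0 → 0 ≤ xhat α
  xhat_spec : ∀ α : ℝ, 0 < α → α ≤ f' 0 → f' (xhat α) = α
  xhat_unique : ∀ α : ℝ, 0 < α → α ≤ f' 0 → ∀ x : ℝ, 0 ≤ x → f' x = α → x = xhat α
  xhat_max : ∀ α : ℝ, 0 < α → α ≤ f' 0 → ∀ x : ℝ, 0 ≤ x → f x - α * x ≤ f (xhat α) - α * xhat α

/-- `f*(α) = f(x̂_α) − α·x̂_α = sup_{x ≥ 0} (f(x) − α x)`. -/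
noncomputable def BenefitFun.fstar (B : BenefitFun) (α : ℝ) : ℝ :=
  B.f (B.xhat α) - α * B.xhat α

/-- `β̃(n) = (1/n)·κ + ((n−1)/n)·(δ+σ)`. -/
noncomputable def btilde (κ δ σ : ℝ) (n : ℕ) : ℝ :=
  (1 / (n:ℝ)) * κ + (((n:ℝ) - 1) / (n:ℝ)) * (δ + σ)

/-- `G(n) = n·f*(β̃(n))` (with `G(0) = 0`). -/
noncomputable def Gfun (B : BenefitFun) (κ δ σ : ℝ) (n : ℕ) : ℝ :=
  (n:ℝ) * B.fstar (btilde κ δ σ n)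

/-- Marginal product: `MP(n) = G(n) − G(n−1)`, so `MP(1) = G(1)`. -/
noncomputable def MP (B : BenefitFun) (κ δ σ : ℝ) (n : ℕ) : ℝ :=
  Gfun B κ δ σ n - Gfun B κ δ σ (n - 1)

/-- The coalitional game `v(S) = |S|·f*(β̃(|S|))` (so `v(∅) = 0`). -/
noncomputable def vgame (B : BenefitFun) (κ δ σ : ℝ) {N : ℕ} (S : Finset (Fin N)) : ℝ :=
  (S.card : ℝ) * B.fstar (btilde κ δ σ S.card)

section Aux

variable (B : BenefitFun) (κ δ σ : ℝ)

lemma fstar_support {α γ : ℝ} (hα0 : 0 < α) (hα1 : α ≤ B.f' 0)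
    (hγ0 : 0 < γ) (hγ1 : γ ≤ B.f' 0) :
    B.fstar γ ≤ B.fstar α + (α - γ) * B.xhat γ := by
  have hx : 0 ≤ B.xhat γ := B.xhat_nonneg γ hγ0 hγ1
  have h := B.xhat_max α hα0 hα1 (B.xhat γ) hx
  unfold BenefitFun.fstar
  nlinarith [h]

lemma btilde_pos (hκ : 0 < κ) (hδ : 0 < δ) (hσ : 0 < σ) {n : ℕ} (hn : 1 ≤ n) : 0 < btilde κ δ σ n := by
  have h1 : (1:ℝ) ≤ (n:ℝ) := by exact_mod_cast hn
  have : 0 < (n:ℝ) := by linarith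
  unfold btilde
  have h2 : 0 < (1 / (n:ℝ)) * κ := by positivity
  have h3 : 0 ≤ (((n:ℝ) - 1) / (n:ℝ)) * (δ + σ) := by
    apply mul_nonneg (div_nonneg (by linarith) (by linarith)) (by linarith)
  linarith

lemma btilde_le (hcost : δ + σ < κ) {n : ℕ} (hn : 1 ≤ n) : btilde κ δ σ n ≤ κ := by
  have h1 : (1:ℝ) ≤ (n:ℝ) := by exact_mod_cast hn
  have hn0 : (n:ℝ) ≠ 0 := by linarith
  have key : btilde κ δ σ n - κ = (((n:ℝ) - 1) / (n:ℝ)) * ((δ + σ) - κ) := by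
    unfold btilde; field_simp; ring
  have : (((n:ℝ) - 1) / (n:ℝ)) * ((δ + σ) - κ) ≤ 0 :=
    mul_nonpos_of_nonneg_of_nonpos (div_nonneg (by linarith) (by linarith)) (by linarith)
  linarith

lemma btilde_le_f' (hcost : δ + σ < κ) (hκf : κ < B.f' 0) {n : ℕ} (hn : 1 ≤ n) : btilde κ δ σ n ≤ B.f' 0 :=
  le_trans (btilde_le κ δ σ hcost hn) (le_of_lt hκf)

variable (hκ : 0 < κ) (hδ : 0 < δ) (hσ : 0 < σ) (hcost : δ + σ < κ) (hκf : κ < B.f' 0)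

include hκ hδ hσ hcost hκf in
lemma MP_succ_mono {n : ℕ} (hn : 1 ≤ n) :
    MP B κ δ σ n ≤ MP B κ δ σ (n + 1) := by
  obtain ⟨m, rfl⟩ := Nat.exists_eq_add_of_le hn
  have e1 : MP B κ δ σ (1 + m) = Gfun B κ δ σ (m + 1) - Gfun B κ δ σ m := by
    simp [MP, Nat.add_comm]
  have e2 : MP B κ δ σ (1 + m + 1) = Gfun B κ δ σ (m + 2) - Gfun B κ δ σ (m + 1) := by
    have : 1 + m + 1 = m + 2 := by omega
    rw [this]; simp [MP]
  rw [e1, e2]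
  -- suffices: 2 * G(m+1) ≤ G(m+2) + G(m)
  rcases Nat.eq_zero_or_pos m with rfl | hm
  · -- need 2 * G 1 ≤ G 2 + G 0, i.e. f*(β̃1) ≤ f*(β̃2)
    have h1 := btilde_pos κ δ σ hκ hδ hσ (n := 1) le_rfl
    have h1' := btilde_le_f' B κ δ σ hcost hκf (n := 1) le_rfl
    have h2 := btilde_pos κ δ σ hκ hδ hσ (n := 2) (by norm_num)
    have h2' := btilde_le_f' B κ δ σ hcost hκf (n := 2) (by norm_num)
    have hsupp := fstar_support B (α := btilde κ δ σ 2) (γ := btilde κ δ σ 1) h2 h2' h1 h1'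
    have hx : 0 ≤ B.xhat (btilde κ δ σ 1) := B.xhat_nonneg _ h1 h1'
    have hle : btilde κ δ σ 2 ≤ btilde κ δ σ 1 := by
      unfold btilde; push_cast; nlinarith
    have : B.fstar (btilde κ δ σ 1) ≤ B.fstar (btilde κ δ σ 2) := by
      nlinarith [mul_nonpos_of_nonpos_of_nonneg (by linarith : btilde κ δ σ 2 - btilde κ δ σ 1 ≤ 0) hx]
    simp only [Gfun]
    push_cast
    nlinarith
  · -- general case m ≥ 1: perspective identity
    have hm1 : (1:ℝ) ≤ (m:ℝ) := by exact_mod_cast hm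
    have bp : ∀ k : ℕ, 1 ≤ k → 0 < btilde κ δ σ k ∧ btilde κ δ σ k ≤ B.f' 0 := fun k hk =>
      ⟨btilde_pos κ δ σ hκ hδ hσ hk, btilde_le_f' B κ δ σ hcost hκf hk⟩
    obtain ⟨hpm, hlm⟩ := bp m hm
    obtain ⟨hp1, hl1⟩ := bp (m+1) (by omega)
    obtain ⟨hp2, hl2⟩ := bp (m+2) (by omega)
    set x := B.xhat (btilde κ δ σ (m+1)) with hx
    have hA := fstar_support B (α := btilde κ δ σ (m+2)) (γ := btilde κ δ σ (m+1)) hp2 hl2 hp1 hl1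
    have hB := fstar_support B (α := btilde κ δ σ m) (γ := btilde κ δ σ (m+1)) hpm hlm hp1 hl1
    -- identity: (m+2)*β̃(m+2) + m*β̃(m) = 2*(m+1)*β̃(m+1)
    have hid : ((m:ℝ)+2) * btilde κ δ σ (m+2) + (m:ℝ) * btilde κ δ σ m
        = 2 * ((m:ℝ)+1) * btilde κ δ σ (m+1) := by
      unfold btilde
      push_cast
      have h0 : (m:ℝ) ≠ 0 := by linarith
      have h1 : (m:ℝ) + 1 ≠ 0 := by linarith
      have h2 : (m:ℝ) + 2 ≠ 0 := by linarith
      field_simp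
      ring
    have hidx : ((↑m + 2) * btilde κ δ σ (m+2) + ↑m * btilde κ δ σ m) * B.xhat (btilde κ δ σ (m+1))
        = (2 * ((↑m:ℝ) + 1) * btilde κ δ σ (m+1)) * B.xhat (btilde κ δ σ (m+1)) := by rw [hid]
    simp only [Gfun]
    push_cast
    -- goal: (m+1)*f*(β̃(m+1)) - m*f*(β̃ m) ≤ (m+2)*f*(β̃(m+2)) - (m+1)*f*(β̃(m+1))
    nlinarith [mul_le_mul_of_nonneg_left hA (by linarith : (0:ℝ) ≤ (m:ℝ)+2),
      mul_le_mul_of_nonneg_left hB (by linarith : (0:ℝ) ≤ (m:ℝ)), hidx]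

include hκ hδ hσ hcost hκf in
lemma MP_mono {a b : ℕ} (ha : 1 ≤ a) (hab : a ≤ b) :
    MP B κ δ σ a ≤ MP B κ δ σ b := by
  induction b with
  | zero => omega
  | succ k ih =>
    rcases Nat.lt_or_ge a (k+1) with h | h
    · exact le_trans (ih (by omega)) (MP_succ_mono B κ δ σ hκ hδ hσ hcost hκf (by omega))
    · have : a = k + 1 := by omega
      subst this; rfl

lemma Gfun_succ (n : ℕ) :
    Gfun B κ δ σ (n + 1) = Gfun B κ δ σ n + MP B κ δ σ (n + 1) := by
  simp [MP]

include hκ hδ hσ hcost hκf in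
lemma core_aux {N : ℕ} : ∀ s : ℕ, ∀ S : Finset (Fin N), S.card = s →
    Gfun B κ δ σ s ≤ ∑ i ∈ S, MP B κ δ σ (i.1 + 1) := by
  intro s
  induction s with
  | zero =>
    intro S hS
    rw [Finset.card_eq_zero] at hS
    subst hS
    simp [Gfun]
  | succ t ih =>
    intro S hS
    have hne : S.Nonempty := Finset.card_pos.mp (by omega)
    set M := S.max' hne with hM
    have hMem : M ∈ S := S.max'_mem hne
    have hsub : S ⊆ Finset.Iic M := fun i hi => Finset.mem_Iic.mpr (S.le_max' i hi)
    have hcard : S.card ≤ M.1 + 1 := by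
      calc S.card ≤ (Finset.Iic M).card := Finset.card_le_card hsub
        _ = M.1 + 1 := Fin.card_Iic M
    have htM : t + 1 ≤ M.1 + 1 := by omega
    have hsum : ∑ i ∈ S, MP B κ δ σ (i.1 + 1)
        = MP B κ δ σ (M.1 + 1) + ∑ i ∈ S.erase M, MP B κ δ σ (i.1 + 1) :=
      (Finset.add_sum_erase S _ hMem).symm
    have hcard' : (S.erase M).card = t := by
      rw [Finset.card_erase_of_mem hMem, hS]; omega
    have hih := ih (S.erase M) hcard'
    have hmp : MP B κ δ σ (t + 1) ≤ MP B κ δ σ (M.1 + 1) :=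
      MP_mono B κ δ σ hκ hδ hσ hcost hκf (by omega) htM
    rw [hsum, Gfun_succ]
    linarith

end Aux

theorem stmt6 (B : BenefitFun) (N : ℕ) (hN : 2 ≤ N)
    (κ δ σ : ℝ) (hκ : 0 < κ) (hδ : 0 < δ) (hσ : 0 < σ)
    (hcost : δ + σ < κ) (hκf : κ < B.f' 0)
    (β : ℝ) (hβ : β = (1 / (N:ℝ)) * κ + (((N:ℝ) - 1) / (N:ℝ)) * (δ + σ)) :
    (∑ i : Fin N, MP B κ δ σ (i.1 + 1)) = (N:ℝ) * B.fstar (btilde κ δ σ N)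
    ∧ (N:ℝ) * B.fstar (btilde κ δ σ N) = (N:ℝ) * B.fstar β
    ∧ ∀ S : Finset (Fin N), S.Nonempty →
        vgame B κ δ σ S ≤ ∑ i ∈ S, MP B κ δ σ (i.1 + 1) := by

  constructor
  · rw [Fin.sum_univ_eq_sum_range (fun k => MP B κ δ σ (k + 1)) N]
    have : ∀ k, MP B κ δ σ (k+1) = Gfun B κ δ σ (k+1) - Gfun B κ δ σ k := by
      intro k; simp [MP]
    simp only [this]
    rw [Finset.sum_range_sub (fun k => Gfun B κ δ σ k)]
    simp [Gfun]
  constructor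
  · rw [hβ]; rfl
  · intro S hne
    have := core_aux B κ δ σ hκ hδ hσ hcost hκf S.card S rfl
    simpa [vgame, Gfun] using this
end

section
/- Let p* := (κ + (N−1)·σ − δ)/N, and consider the N-player game in which each peer i chooses x_i ≥ 0 and receives payoff π_i(x) = f(∑_{j=1}^N x_j) − κ·x_i − (p* + δ)·∑_{j≠i} x_j + (p* − σ)·(N−1)·x_i (the content production game under the linear pricing scheme with price p*, with full sharing y_i = x_i and full downloading substituted in). Then: (a) p* + δ = β = κ + (N−1)·σ − (N−1)·p*, and consequently π_i(x) = f(∑_{j=1}^N x_j) − β·∑_{j=1}^N x_j for every x ∈ ℝ_+^N and every i; (b) x ∈ ℝ_+^N is a Nash equilibrium (for each i, x_i maximizes π_i over [0,∞) given x_{−i}) if and only if ∑_{j=1}^N x_j = x̂_β; (c) at every Nash equilibrium, each peer's payoff equals f*(β). -/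
/-!
At the price `p*` every peer pays the same marginal cost `β` for his own content as for the
content of the others, so each payoff collapses to `g(S) = f(S) − β·S`, a strictly concave
function of the aggregate `S = ∑ⱼ xⱼ` alone. A unilateral deviation of peer `i` moves `S`
through all of `[S − xᵢ, ∞)`, which is a neighbourhood of `S` in `[0, ∞)` once `xᵢ > 0`. Hence
at a Nash equilibrium `S` is a local, and by concavity a global, maximizer of `g` on `[0, ∞)`,
which by strict concavity forces `S = x̂_β`; conversely `x̂_β` maximizes `g`.
-/

open Filter Finset

/-- Peer `i`'s payoff in the content production game under the linear pricing scheme with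
price `p` (full sharing and full downloading substituted in):
`πᵢ(x) = f(∑ⱼ xⱼ) − κ xᵢ − (p + δ)·∑_{j≠i} xⱼ + (p − σ)·(N−1)·xᵢ`. -/
noncomputable def payoffP (B : BenefitFun) (κ δ σ p : ℝ) {N : ℕ}
    (x : Fin N → ℝ) (i : Fin N) : ℝ :=
  B.f (∑ j, x j) - κ * x i - (p + δ) * (∑ j ∈ Finset.univ.erase i, x j)
    + (p - σ) * ((N:ℝ) - 1) * x i

open Set

namespace BenefitFun

variable (B : BenefitFun)

theorem hasDerivAt_f {x : ℝ} (hx : 0 < x) : HasDerivAt B.f (B.f' x) x :=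
  (B.hasDeriv x hx.le).hasDerivAt (Ici_mem_nhds hx)

theorem hasDerivAt_f' {x : ℝ} (hx : 0 < x) : HasDerivAt B.f' (B.f'' x) x :=
  (B.hasDeriv' x hx.le).hasDerivAt (Ici_mem_nhds hx)

theorem strictAntiOn_f' : StrictAntiOn B.f' (Ioi 0) :=
  strictAntiOn_of_hasDerivWithinAt_neg (convex_Ioi 0)
    (fun _ hx => (B.hasDerivAt_f' hx).continuousAt.continuousWithinAt)
    (fun _ hx => (B.hasDerivAt_f' (interior_subset hx)).hasDerivWithinAt)
    (fun x hx => B.f''_neg x (interior_subset hx))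

theorem strictConcaveOn_f : StrictConcaveOn ℝ (Ici 0) B.f := by
  refine StrictAntiOn.strictConcaveOn_of_deriv (convex_Ici 0)
    (fun x hx => (B.hasDeriv x hx).continuousWithinAt) ?_
  rw [interior_Ici]
  exact B.strictAntiOn_f'.congr fun x hx => ((B.hasDerivAt_f hx).deriv).symm

theorem strictConcaveOn_sub_mul (α : ℝ) :
    StrictConcaveOn ℝ (Ici 0) fun s => B.f s - α * s :=
  B.strictConcaveOn_f.sub_convexOn ((LinearMap.mul ℝ ℝ α).convexOn (convex_Ici 0))

theorem isMaxOn_sub_mul_iff_eq_xhat {α s : ℝ} (hα : 0 < α) (hαf : α ≤ B.f' 0) (hs : 0 ≤ s) :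
    IsMaxOn (fun s => B.f s - α * s) (Ici 0) s ↔ s = B.xhat α := by
  have hmax : IsMaxOn (fun s => B.f s - α * s) (Ici 0) (B.xhat α) :=
    fun x hx => B.xhat_max α hα hαf x hx
  constructor
  · intro hs_max
    exact (B.strictConcaveOn_sub_mul α).eq_of_isMaxOn hs_max hmax hs (B.xhat_nonneg α hα hαf)
  · rintro rfl
    exact hmax

end BenefitFun

def IsNashEquilibrium {ι : Type*} [DecidableEq ι] (π : (ι → ℝ) → ι → ℝ) (x : ι → ℝ) : Prop :=
  ∀ i, ∀ x' : ℝ, 0 ≤ x' → π (Function.update x i x') i ≤ π x i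

theorem sum_update_eq_sub_add {ι : Type*} [Fintype ι] [DecidableEq ι] (x : ι → ℝ) (i : ι) (x' : ℝ) :
    ∑ j, Function.update x i x' j = ∑ j, x j - x i + x' := by
  rw [Finset.sum_update_of_mem (Finset.mem_univ i), Finset.sdiff_singleton_eq_erase,
    Finset.sum_erase_eq_sub (Finset.mem_univ i)]
  ring

theorem isNashEquilibrium_iff_isMaxOn {ι : Type*} [Fintype ι] [DecidableEq ι] [Nonempty ι]
    {g : ℝ → ℝ} (hg : ConcaveOn ℝ (Ici 0) g) {π : (ι → ℝ) → ι → ℝ}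
    (hπ : ∀ x i, π x i = g (∑ j, x j)) {x : ι → ℝ} (hx : ∀ j, 0 ≤ x j) :
    IsNashEquilibrium π x ↔ IsMaxOn g (Ici 0) (∑ j, x j) := by
  set S := ∑ j, x j
  have hS : 0 ≤ S := Finset.sum_nonneg fun j _ => hx j
  constructor
  · intro hNE
    have hdev : ∀ i t, S - x i ≤ t → g t ≤ g S := fun i t ht => by
      have h := hNE i (t - (S - x i)) (sub_nonneg.2 ht)
      rwa [hπ, hπ, sum_update_eq_sub_add, add_sub_cancel] at h
    rcases hS.eq_or_lt with hS0 | hSpos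
    · let i := Classical.arbitrary ι
      have hxi : x i = 0 :=
        (Finset.sum_eq_zero_iff_of_nonneg fun j _ => hx j).1 hS0.symm i (Finset.mem_univ i)
      exact fun t ht => hdev i t (by rw [← hS0, hxi, sub_zero]; exact ht)
    · obtain ⟨i, -, hi⟩ : ∃ i ∈ Finset.univ, (0 : ι → ℝ) i < x i :=
        Finset.exists_lt_of_sum_lt (by simpa using hSpos)
      refine IsMaxOn.of_isLocalMaxOn_of_concaveOn hS ?_ hg
      filter_upwards [nhdsWithin_le_nhds (Ioi_mem_nhds (sub_lt_self S hi))] with t ht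
      exact hdev i t (le_of_lt ht)
  · intro hmax i x' hx'
    have hxi : x i ≤ S := Finset.single_le_sum (fun j _ => hx j) (Finset.mem_univ i)
    rw [hπ, hπ, sum_update_eq_sub_add]
    exact hmax (show 0 ≤ S - x i + x' by linarith)

theorem btilde_mem_Icc {κ δ σ : ℝ} {n : ℕ} (hn : 1 ≤ n) (hcost : δ + σ ≤ κ) :
    btilde κ δ σ n ∈ Icc (δ + σ) κ := by
  have hn' : (1 : ℝ) ≤ n := by exact_mod_cast hn
  have hw : 0 ≤ 1 / (n : ℝ) := by positivity
  have hw1 : 1 / (n : ℝ) ≤ 1 := by rw [div_le_one (by linarith)]; exact hn'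
  have hweights : ((n : ℝ) - 1) / n = 1 - 1 / n := by field_simp
  rw [btilde, hweights]
  constructor <;> nlinarith

/-- The price at which the coefficient of `xᵢ` in `payoffP_eq` vanishes. -/
noncomputable def sharingPrice (κ δ σ : ℝ) (n : ℕ) : ℝ :=
  (κ + ((n : ℝ) - 1) * σ - δ) / n

section sharingPrice

variable {κ δ σ : ℝ} {n : ℕ}

theorem sharingPrice_add_eq_btilde (hn : (n : ℝ) ≠ 0) :
    sharingPrice κ δ σ n + δ = btilde κ δ σ n := by
  unfold sharingPrice btilde
  field_simp
  ring

theorem btilde_eq_sub_sharingPrice (hn : (n : ℝ) ≠ 0) :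
    btilde κ δ σ n = κ + ((n : ℝ) - 1) * σ - ((n : ℝ) - 1) * sharingPrice κ δ σ n := by
  unfold sharingPrice btilde
  field_simp
  ring

end sharingPrice

theorem payoffP_eq (B : BenefitFun) (κ δ σ p : ℝ) {N : ℕ} (x : Fin N → ℝ) (i : Fin N) :
    payoffP B κ δ σ p x i = B.f (∑ j, x j) - (p + δ) * ∑ j, x j
      + (N * p - (κ + ((N : ℝ) - 1) * σ - δ)) * x i := by
  rw [payoffP, Finset.sum_erase_eq_sub (Finset.mem_univ i)]
  ring

theorem payoffP_sharingPrice (B : BenefitFun) (κ δ σ : ℝ) {N : ℕ} (x : Fin N → ℝ) (i : Fin N) :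
    payoffP B κ δ σ (sharingPrice κ δ σ N) x i
      = B.f (∑ j, x j) - btilde κ δ σ N * ∑ j, x j := by
  have hN : (N : ℝ) ≠ 0 := Nat.cast_ne_zero.2 i.pos.ne'
  rw [payoffP_eq, sharingPrice_add_eq_btilde hN, sharingPrice, mul_div_cancel₀ _ hN, sub_self,
    zero_mul, add_zero]

theorem stmt10_general (B : BenefitFun) (N : ℕ) (hN : 2 ≤ N)
    (κ δ σ : ℝ) (hδ : 0 < δ) (hσ : 0 < σ)
    (hcost : δ + σ < κ) (hκf : κ < B.f' 0)
    (β : ℝ) (hβ : β = (1 / (N:ℝ)) * κ + (((N:ℝ) - 1) / (N:ℝ)) * (δ + σ))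
    (pstar : ℝ) (hp : pstar = (κ + ((N:ℝ) - 1) * σ - δ) / (N:ℝ)) :
    -- (a)
    (pstar + δ = β ∧ β = κ + ((N:ℝ) - 1) * σ - ((N:ℝ) - 1) * pstar
      ∧ ∀ x : Fin N → ℝ, (∀ j, 0 ≤ x j) → ∀ i : Fin N,
          payoffP B κ δ σ pstar x i = B.f (∑ j, x j) - β * (∑ j, x j))
    -- (b)
    ∧ (∀ x : Fin N → ℝ, (∀ j, 0 ≤ x j) →
        ((∀ i : Fin N, ∀ x' : ℝ, 0 ≤ x' →
            payoffP B κ δ σ pstar (Function.update x i x') i ≤ payoffP B κ δ σ pstar x i)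
          ↔ (∑ j, x j) = B.xhat β))
    -- (c)
    ∧ (∀ x : Fin N → ℝ, (∀ j, 0 ≤ x j) →
        (∀ i : Fin N, ∀ x' : ℝ, 0 ≤ x' →
            payoffP B κ δ σ pstar (Function.update x i x') i ≤ payoffP B κ δ σ pstar x i) →
        ∀ i : Fin N, payoffP B κ δ σ pstar x i = B.fstar β) := by
  obtain rfl : β = btilde κ δ σ N := hβ
  obtain rfl : pstar = sharingPrice κ δ σ N := hp
  have : NeZero N := ⟨by omega⟩
  have hN0 : (N : ℝ) ≠ 0 := NeZero.ne _
  obtain ⟨hβ_ge, hβ_le⟩ : btilde κ δ σ N ∈ Icc (δ + σ) κ := btilde_mem_Icc (by omega) hcost.le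
  have hβ_pos : 0 < btilde κ δ σ N := by linarith
  have hβ_le_f' : btilde κ δ σ N ≤ B.f' 0 := by linarith
  have hNash : ∀ x : Fin N → ℝ, (∀ j, 0 ≤ x j) →
      (IsNashEquilibrium (payoffP B κ δ σ (sharingPrice κ δ σ N)) x ↔
        ∑ j, x j = B.xhat (btilde κ δ σ N)) := fun x hx =>
    (isNashEquilibrium_iff_isMaxOn (B.strictConcaveOn_sub_mul _).concaveOn
      (payoffP_sharingPrice B κ δ σ) hx).trans
      (B.isMaxOn_sub_mul_iff_eq_xhat hβ_pos hβ_le_f' (Finset.sum_nonneg fun j _ => hx j))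
  refine ⟨⟨sharingPrice_add_eq_btilde hN0, btilde_eq_sub_sharingPrice hN0,
    fun x _ i => payoffP_sharingPrice B κ δ σ x i⟩, hNash, fun x hx hx_nash i => ?_⟩
  rw [payoffP_sharingPrice, (hNash x hx).1 hx_nash]
  rfl

theorem stmt10 (B : BenefitFun) (N : ℕ) (hN : 2 ≤ N)
    (κ δ σ : ℝ) (hκ : 0 < κ) (hδ : 0 < δ) (hσ : 0 < σ)
    (hcost : δ + σ < κ) (hκf : κ < B.f' 0)
    (β : ℝ) (hβ : β = (1 / (N:ℝ)) * κ + (((N:ℝ) - 1) / (N:ℝ)) * (δ + σ))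
    (pstar : ℝ) (hp : pstar = (κ + ((N:ℝ) - 1) * σ - δ) / (N:ℝ)) :
    -- (a)
    (pstar + δ = β ∧ β = κ + ((N:ℝ) - 1) * σ - ((N:ℝ) - 1) * pstar
      ∧ ∀ x : Fin N → ℝ, (∀ j, 0 ≤ x j) → ∀ i : Fin N,
          payoffP B κ δ σ pstar x i = B.f (∑ j, x j) - β * (∑ j, x j))
    -- (b)
    ∧ (∀ x : Fin N → ℝ, (∀ j, 0 ≤ x j) →
        ((∀ i : Fin N, ∀ x' : ℝ, 0 ≤ x' →
            payoffP B κ δ σ pstar (Function.update x i x') i ≤ payoffP B κ δ σ pstar x i)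
          ↔ (∑ j, x j) = B.xhat β))
    -- (c)
    ∧ (∀ x : Fin N → ℝ, (∀ j, 0 ≤ x j) →
        (∀ i : Fin N, ∀ x' : ℝ, 0 ≤ x' →
            payoffP B κ δ σ pstar (Function.update x i x') i ≤ payoffP B κ δ σ pstar x i) →
        ∀ i : Fin N, payoffP B κ δ σ pstar x i = B.fstar β) :=
  stmt10_general B N hN κ δ σ hδ hσ hcost hκf β hβ pstar hp
end
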